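/- Let μ ∈ (0, 1/4], and let U ⊆ ℍ² be a nonempty open set whose closure is a compact subset of ℍ². Suppose u is C¹ on the closure of U, smooth on U, satisfies −Δu = μu pointwise in U, and u = 0 on ∂U. Then u is identically zero on U. (In particular, the nodal set of an eigenfunction with eigenvalue at most 1/4 cannot contain a loop bounding a subdomain on which the function is nonzero.) -/

import Mathlib

open MeasureTheory Filter Set Topology

noncomputable section

/-- The upper half-plane model of the hyperbolic plane. -/
def H2 : Set (ℝ × ℝ) := {p | 0 < p.2}

/-- Inverse hyperbolic cosine. -/
def arcosh (t : ℝ) : ℝ := Real.log (t + Real.sqrt (t ^ 2 - 1))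

/-- Hyperbolic distance in the upper half-plane model. -/
def hypDist (a b : ℝ × ℝ) : ℝ :=
  arcosh (1 + ((a.1 - b.1) ^ 2 + (a.2 - b.2) ^ 2) / (2 * a.2 * b.2))

/-- Partial derivative in the `x` direction. -/
def pdx (u : ℝ × ℝ → ℝ) (p : ℝ × ℝ) : ℝ := fderiv ℝ u p (1, 0)

/-- Partial derivative in the `y` direction. -/
def pdy (u : ℝ × ℝ → ℝ) (p : ℝ × ℝ) : ℝ := fderiv ℝ u p (0, 1)

/-- Squared Euclidean norm of the gradient. -/
def gradSq (u : ℝ × ℝ → ℝ) (p : ℝ × ℝ) : ℝ := pdx u p ^ 2 + pdy u p ^ 2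

/-- The hyperbolic Laplacian `Δu = y²(u_xx + u_yy)`. -/
def hypLap (u : ℝ × ℝ → ℝ) (p : ℝ × ℝ) : ℝ :=
  p.2 ^ 2 * (pdx (pdx u) p + pdy (pdy u) p)

/-- Geodesic convexity in the hyperbolic metric. -/
def GeodesicallyConvex (Ω : Set (ℝ × ℝ)) : Prop :=
  ∀ a ∈ Ω, ∀ b ∈ Ω, ∀ c ∈ H2, hypDist a c + hypDist c b = hypDist a b → c ∈ Ω

/-- `ν` is a Euclidean unit vector, the boundary of `Ω` has a tangent line at `q`
(the line through `q` orthogonal to `ν`), and `ν` points outward from `Ω`. -/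
def IsOutwardNormalAt (Ω : Set (ℝ × ℝ)) (q ν : ℝ × ℝ) : Prop :=
  ν.1 ^ 2 + ν.2 ^ 2 = 1 ∧
  Tendsto (fun x : ℝ × ℝ =>
      |(x.1 - q.1) * ν.1 + (x.2 - q.2) * ν.2| /
        Real.sqrt ((x.1 - q.1) ^ 2 + (x.2 - q.2) ^ 2))
    (𝓝[frontier Ω \ {q}] q) (𝓝 0) ∧
  ∀ᶠ t in 𝓝[>] (0 : ℝ), q + t • ν ∉ Ω


/-- 1D second derivative test at a local max. -/
lemma secondDeriv_nonpos_of_isLocalMax' {φ ψ : ℝ → ℝ} {D : ℝ}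
    (hmax : IsLocalMax φ 0) (hψ0 : ψ 0 = 0)
    (hφ : ∀ᶠ t in 𝓝 (0:ℝ), HasDerivAt φ (ψ t) t)
    (hψ : HasDerivAt ψ D 0) : D ≤ 0 := by
  by_contra hD
  push_neg at hD
  have hslope := hasDerivAt_iff_tendsto_slope.1 hψ
  have hpos : ∀ᶠ t in 𝓝[>] (0:ℝ), 0 < ψ t := by
    have h1 : ∀ᶠ t in 𝓝[≠] (0:ℝ), 0 < slope ψ 0 t :=
      hslope.eventually_const_lt hD
    have h2 : 𝓝[>] (0:ℝ) ≤ 𝓝[≠] (0:ℝ) := nhdsWithin_mono _ (fun t ht => ne_of_gt ht)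
    filter_upwards [h2 h1, self_mem_nhdsWithin] with t ht ht'
    have ht'' : (0:ℝ) < t := ht'
    have hts : slope ψ 0 t = ψ t / t := by simp [slope_def_field, hψ0]
    rw [hts] at ht
    exact (div_pos_iff.1 ht).elim (fun h => h.1) (fun h => absurd ht'' (by linarith [h.2]))
  obtain ⟨δ1, hδ1, hball⟩ := Metric.eventually_nhds_iff.1 (hφ.and hmax)
  obtain ⟨δ2, hδ2, hball2⟩ := Metric.mem_nhdsWithin_iff.1 hpos
  set δ := min δ1 δ2 / 2 with hδdef
  have hδpos : 0 < δ := by positivity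
  have hδlt1 : δ < δ1 := by
    rcases min_cases δ1 δ2 with ⟨h, _⟩ | ⟨h, h'⟩ <;> simp only [hδdef, h] <;> linarith
  have hδlt2 : δ < δ2 := by
    rcases min_cases δ1 δ2 with ⟨h, h'⟩ | ⟨h, _⟩ <;> simp only [hδdef, h] <;> linarith
  -- φ is strictly monotone on [0, δ]
  have hmono : StrictMonoOn φ (Icc 0 δ) := by
    apply strictMonoOn_of_hasDerivWithinAt_pos (convex_Icc _ _)
      (fun t ht => ((hball (by
        simp only [Real.dist_eq, abs_sub_comm]
        rw [abs_of_nonneg (by linarith [ht.1] : (0:ℝ) ≤ t - 0)]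
        linarith [ht.2])).1.continuousAt.continuousWithinAt))
      (fun t ht => ((hball (by
        simp only [interior_Icc] at ht
        simp only [Real.dist_eq]
        rw [abs_of_nonneg (by linarith [ht.1] : (0:ℝ) ≤ t - 0)]
        linarith [ht.2])).1.hasDerivWithinAt))
      (fun t ht => by
        simp only [interior_Icc] at ht
        exact hball2 ⟨by simp [Real.dist_eq, abs_of_nonneg (le_of_lt ht.1)]; linarith [ht.2], ht.1⟩)
  have : φ 0 < φ δ := hmono (by constructor <;> norm_num [le_of_lt hδpos]) (by constructor <;> norm_num [le_of_lt hδpos]) hδpos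
  have : φ δ ≤ φ 0 := (hball (by simp [Real.dist_eq, abs_of_nonneg (le_of_lt hδpos)]; linarith)).2
  linarith

def gfun (ε c t : ℝ) : ℝ := t ^ ((1:ℝ)/2) * Real.cos (ε * Real.log t - c)
def gfun1 (ε c t : ℝ) : ℝ :=
  t ^ (-(1:ℝ)/2) * ((1/2) * Real.cos (ε * Real.log t - c) - ε * Real.sin (ε * Real.log t - c))
def gfun2 (ε c t : ℝ) : ℝ :=
  -(1/4 + ε^2) * t ^ (-(3:ℝ)/2) * Real.cos (ε * Real.log t - c)

lemma hasDerivAt_gfun {ε c t : ℝ} (ht : 0 < t) :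
    HasDerivAt (gfun ε c) (gfun1 ε c t) t := by
  have htne : t ≠ 0 := ne_of_gt ht
  have h1 : HasDerivAt (fun s : ℝ => s ^ ((1:ℝ)/2)) ((1/2) * t ^ ((1:ℝ)/2 - 1)) t :=
    Real.hasDerivAt_rpow_const (Or.inl htne)
  have h2 : HasDerivAt (fun s : ℝ => ε * Real.log s - c) (ε * t⁻¹) t :=
    (((Real.hasDerivAt_log htne).const_mul ε).sub_const c)
  have h3 : HasDerivAt (fun s : ℝ => Real.cos (ε * Real.log s - c))
      (-Real.sin (ε * Real.log t - c) * (ε * t⁻¹)) t := (Real.hasDerivAt_cos _).comp t h2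
  have := h1.mul h3
  refine HasDerivAt.congr_deriv this ?_
  unfold gfun1
  have e1 : t ^ ((1:ℝ)/2 - 1) = t ^ (-(1:ℝ)/2) := by norm_num
  have e2 : t ^ ((1:ℝ)/2) * t⁻¹ = t ^ (-(1:ℝ)/2) := by
    rw [← Real.rpow_neg_one t, ← Real.rpow_add ht]; norm_num
  rw [e1]
  linear_combination (-(ε * Real.sin (ε * Real.log t - c))) * e2

lemma hasDerivAt_gfun1 {ε c t : ℝ} (ht : 0 < t) :
    HasDerivAt (gfun1 ε c) (gfun2 ε c t) t := by
  have htne : t ≠ 0 := ne_of_gt ht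
  have h1 : HasDerivAt (fun s : ℝ => s ^ (-(1:ℝ)/2)) ((-(1:ℝ)/2) * t ^ (-(1:ℝ)/2 - 1)) t :=
    Real.hasDerivAt_rpow_const (Or.inl htne)
  have h2 : HasDerivAt (fun s : ℝ => ε * Real.log s - c) (ε * t⁻¹) t :=
    (((Real.hasDerivAt_log htne).const_mul ε).sub_const c)
  have h3 : HasDerivAt (fun s : ℝ => Real.cos (ε * Real.log s - c))
      (-Real.sin (ε * Real.log t - c) * (ε * t⁻¹)) t := (Real.hasDerivAt_cos _).comp t h2
  have h4 : HasDerivAt (fun s : ℝ => Real.sin (ε * Real.log s - c))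
      (Real.cos (ε * Real.log t - c) * (ε * t⁻¹)) t := (Real.hasDerivAt_sin _).comp t h2
  have h5 : HasDerivAt (fun s : ℝ => (1/2) * Real.cos (ε * Real.log s - c)
      - ε * Real.sin (ε * Real.log s - c))
      ((1/2) * (-Real.sin (ε * Real.log t - c) * (ε * t⁻¹))
        - ε * (Real.cos (ε * Real.log t - c) * (ε * t⁻¹))) t :=
    (h3.const_mul (1/2)).sub (h4.const_mul ε)
  have := h1.mul h5
  refine HasDerivAt.congr_deriv this ?_
  unfold gfun2
  have e1 : t ^ (-(1:ℝ)/2 - 1) = t ^ (-(3:ℝ)/2) := by norm_num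
  have e2 : t ^ (-(1:ℝ)/2) * t⁻¹ = t ^ (-(3:ℝ)/2) := by
    rw [← Real.rpow_neg_one t, ← Real.rpow_add ht]; norm_num
  rw [e1, ← e2]
  ring

lemma isOpen_H2 : IsOpen H2 := isOpen_lt continuous_const continuous_snd

def hfun (ε c : ℝ) (p : ℝ × ℝ) : ℝ := gfun ε c p.2

lemma hasFDerivAt_hfun {ε c : ℝ} {p : ℝ × ℝ} (hp : 0 < p.2) :
    HasFDerivAt (hfun ε c) ((gfun1 ε c p.2) • ContinuousLinearMap.snd ℝ ℝ ℝ) p :=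
  (hasDerivAt_gfun hp).comp_hasFDerivAt p (hasFDerivAt_snd)

lemma contDiffAt_gfun {ε c t : ℝ} (ht : 0 < t) : ContDiffAt ℝ (⊤ : ℕ∞) (gfun ε c) t := by
  have htne : t ≠ 0 := ne_of_gt ht
  exact (Real.contDiffAt_rpow_const_of_ne htne).mul
    (Real.contDiff_cos.contDiffAt.comp t
      ((contDiffAt_const.mul (Real.contDiffAt_log.2 htne)).sub contDiffAt_const))

lemma contDiffAt_hfun {ε c : ℝ} {p : ℝ × ℝ} (hp : 0 < p.2) :
    ContDiffAt ℝ (⊤ : ℕ∞) (hfun ε c) p :=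
  (contDiffAt_gfun hp).comp p contDiffAt_snd

lemma pdx_hfun {ε c : ℝ} {p : ℝ × ℝ} (hp : 0 < p.2) : pdx (hfun ε c) p = 0 := by
  simp [pdx, (hasFDerivAt_hfun hp).fderiv]

lemma pdy_hfun {ε c : ℝ} {p : ℝ × ℝ} (hp : 0 < p.2) : pdy (hfun ε c) p = gfun1 ε c p.2 := by
  simp [pdy, (hasFDerivAt_hfun hp).fderiv]

lemma pdxx_hfun {ε c : ℝ} {p : ℝ × ℝ} (hp : 0 < p.2) : pdx (pdx (hfun ε c)) p = 0 := by
  have hev : pdx (hfun ε c) =ᶠ[𝓝 p] fun _ => (0:ℝ) := by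
    filter_upwards [isOpen_H2.mem_nhds hp] with q hq
    exact pdx_hfun hq
  simp [pdx, hev.fderiv_eq]

lemma pdyy_hfun {ε c : ℝ} {p : ℝ × ℝ} (hp : 0 < p.2) :
    pdy (pdy (hfun ε c)) p = gfun2 ε c p.2 := by
  have hev : pdy (hfun ε c) =ᶠ[𝓝 p] fun q => gfun1 ε c q.2 := by
    filter_upwards [isOpen_H2.mem_nhds hp] with q hq
    exact pdy_hfun hq
  have hd : HasFDerivAt (fun q : ℝ × ℝ => gfun1 ε c q.2)
      ((gfun2 ε c p.2) • ContinuousLinearMap.snd ℝ ℝ ℝ) p :=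
    (hasDerivAt_gfun1 hp).comp_hasFDerivAt p (hasFDerivAt_snd)
  simp [pdy, hev.fderiv_eq, hd.fderiv]

lemma pd_contDiffOn {f : ℝ × ℝ → ℝ} {s : Set (ℝ × ℝ)} (hs : IsOpen s)
    (hf : ContDiffOn ℝ (⊤ : ℕ∞) f s) (v : ℝ × ℝ) :
    ContDiffOn ℝ (⊤ : ℕ∞) (fun p => fderiv ℝ f p v) s :=
  (ContinuousLinearMap.apply ℝ ℝ v).contDiff.comp_contDiffOn
    (hf.fderiv_of_isOpen hs (by simp))

lemma diffAt_of_contDiffOn {f : ℝ × ℝ → ℝ} {s : Set (ℝ × ℝ)} {p : ℝ × ℝ}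
    (hf : ContDiffOn ℝ (⊤ : ℕ∞) f s) (hs : IsOpen s) (hp : p ∈ s) : DifferentiableAt ℝ f p :=
  (hf.contDiffAt (hs.mem_nhds hp)).differentiableAt (by simp)

lemma pd_mul {f g : ℝ × ℝ → ℝ} {p : ℝ × ℝ} (v : ℝ × ℝ)
    (hf : DifferentiableAt ℝ f p) (hg : DifferentiableAt ℝ g p) :
    fderiv ℝ (fun q => f q * g q) p v = f p * fderiv ℝ g p v + fderiv ℝ f p v * g p := by
  rw [fderiv_fun_mul hf hg]
  simp only [ContinuousLinearMap.add_apply, ContinuousLinearMap.smul_apply, smul_eq_mul]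
  ring

lemma pd_add {f g : ℝ × ℝ → ℝ} {p : ℝ × ℝ} (v : ℝ × ℝ)
    (hf : DifferentiableAt ℝ f p) (hg : DifferentiableAt ℝ g p) :
    fderiv ℝ (fun q => f q + g q) p v = fderiv ℝ f p v + fderiv ℝ g p v := by
  rw [fderiv_fun_add hf hg]; simp

lemma sq_mul_gfun2 {ε c t : ℝ} (ht : 0 < t) :
    t ^ 2 * gfun2 ε c t = -(1/4 + ε^2) * gfun ε c t := by
  have e : t ^ 2 * t ^ (-(3:ℝ)/2) = t ^ ((1:ℝ)/2) := by
    rw [← Real.rpow_natCast t 2, ← Real.rpow_add ht]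
    norm_num
  unfold gfun gfun2
  linear_combination (-(1/4 + ε^2) * Real.cos (ε * Real.log t - c)) * e

/-! the main auxiliary lemma -/

lemma aux_nonpos
    (μ : ℝ) (hμpos : 0 < μ) (hμle : μ ≤ 1 / 4)
    (U : Set (ℝ × ℝ)) (hUH : U ⊆ H2) (hne : U.Nonempty) (hopen : IsOpen U)
    (hcomp : IsCompact (closure U)) (hclH : closure U ⊆ H2)
    (u : ℝ × ℝ → ℝ)
    (hC1 : ContDiffOn ℝ 1 u (closure U))
    (hsmooth : ContDiffOn ℝ (⊤ : ℕ∞) u U)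
    (heigen : ∀ p ∈ U, -hypLap u p = μ * u p)
    (hbdry : ∀ q ∈ frontier U, u q = 0) :
    ∀ p ∈ U, u p ≤ 0 := by
  have hKne : (closure U).Nonempty := hne.closure
  have hAcomp : IsCompact (Prod.snd '' closure U) := hcomp.image continuous_snd
  have hAne : (Prod.snd '' closure U).Nonempty := hKne.image _
  obtain ⟨a, haA, hamin⟩ := hAcomp.exists_isLeast hAne
  obtain ⟨b, hbA, hbmax⟩ := hAcomp.exists_isGreatest hAne
  have hy : ∀ p ∈ closure U, 0 < p.2 := fun p hp => hclH hp
  have ha : 0 < a := by obtain ⟨p, hp, rfl⟩ := haA; exact hy p hp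
  have hab' : a ≤ b := hamin hbA
  have hb : 0 < b := lt_of_lt_of_le ha hab'
  have hyab : ∀ p ∈ closure U, a ≤ p.2 ∧ p.2 ≤ b :=
    fun p hp => ⟨hamin ⟨p, hp, rfl⟩, hbmax ⟨p, hp, rfl⟩⟩
  set L : ℝ := Real.log b - Real.log a with hLdef
  have hL0 : 0 ≤ L := sub_nonneg.2 (Real.log_le_log ha hab')
  set ε : ℝ := 1 / (L + 1) with hεdef
  have hε : 0 < ε := by positivity
  have hεL : ε * L < 1 := by
    rw [hεdef, div_mul_eq_mul_div, div_lt_one (by linarith)]; linarith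
  set c : ℝ := ε * ((Real.log a + Real.log b) / 2) with hcdef
  set h : ℝ × ℝ → ℝ := hfun ε c with hhdef
  -- positivity of the cosine factor and of h on the closure
  have hθ : ∀ p ∈ closure U, |ε * Real.log p.2 - c| ≤ ε * L / 2 := by
    intro p hp
    obtain ⟨h1, h2⟩ := hyab p hp
    have hla : Real.log a ≤ Real.log p.2 := Real.log_le_log ha h1
    have hlb : Real.log p.2 ≤ Real.log b := Real.log_le_log (hy p hp) h2
    rw [abs_le]
    constructor
    · rw [hcdef, hLdef]
      nlinarith [mul_le_mul_of_nonneg_left hla hε.le]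
    · rw [hcdef, hLdef]
      nlinarith [mul_le_mul_of_nonneg_left hlb hε.le]
  have hcos : ∀ p ∈ closure U, 0 < Real.cos (ε * Real.log p.2 - c) := by
    intro p hp
    have h1 := hθ p hp
    have h2 := abs_le.1 h1
    have hπ := Real.pi_gt_three
    apply Real.cos_pos_of_mem_Ioo
    constructor <;> [nlinarith [h2.1]; nlinarith [h2.2]]
  have hpos : ∀ p ∈ closure U, 0 < h p := by
    intro p hp
    exact mul_pos (Real.rpow_pos_of_pos (hy p hp) _) (hcos p hp)
  -- the ground-state quotient w
  set w : ℝ × ℝ → ℝ := fun p => u p / h p with hwdef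
  have hhcont : ContinuousOn h (closure U) :=
    fun p hp => ((contDiffAt_hfun (hy p hp)).continuousAt).continuousWithinAt
  have hwcont : ContinuousOn w (closure U) :=
    (hC1.continuousOn).div hhcont (fun p hp => ne_of_gt (hpos p hp))
  obtain ⟨p₀, hp₀K, hp₀max⟩ := hcomp.exists_isMaxOn hKne hwcont
  have key : w p₀ ≤ 0 := by
    by_contra hwle
    push_neg at hwle
    -- the max point is interior
    have hp₀U : p₀ ∈ U := by
      by_contra hnot
      have hfr : p₀ ∈ frontier U := by
        rw [frontier, hopen.interior_eq]; exact ⟨hp₀K, hnot⟩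
      have hu0 : u p₀ = 0 := hbdry _ hfr
      rw [hwdef] at hwle
      simp only [hu0, zero_div] at hwle
      exact lt_irrefl _ hwle
    have hUnhds : U ∈ 𝓝 p₀ := hopen.mem_nhds hp₀U
    have hlocmax : IsLocalMax w p₀ :=
      hp₀max.isLocalMax (mem_of_superset hUnhds subset_closure)
    have hcrit : fderiv ℝ w p₀ = 0 := hlocmax.fderiv_eq_zero
    -- smoothness of w and h
    have hhsm : ContDiffOn ℝ (⊤ : ℕ∞) h H2 := fun p hp => (contDiffAt_hfun hp).contDiffWithinAt
    have hwsm : ContDiffOn ℝ (⊤ : ℕ∞) w U :=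
      hsmooth.div (hhsm.mono hUH) (fun p hp => ne_of_gt (hpos p (subset_closure hp)))
    -- first-derivative identity on U
    have hfirst : ∀ v : ℝ × ℝ, ∀ q ∈ U,
        fderiv ℝ u q v = h q * fderiv ℝ w q v + fderiv ℝ h q v * w q := by
      intro v q hq
      have hev : u =ᶠ[𝓝 q] fun r => h r * w r := by
        filter_upwards [hopen.mem_nhds hq] with r hr
        rw [hwdef]
        field_simp [ne_of_gt (hpos r (subset_closure hr))]
      rw [hev.fderiv_eq]
      exact pd_mul v (diffAt_of_contDiffOn hhsm isOpen_H2 (hUH hq))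
        (diffAt_of_contDiffOn hwsm hopen hq)
    -- second-derivative identity at the critical point
    have hsecond : ∀ v : ℝ × ℝ,
        fderiv ℝ (fun q => fderiv ℝ u q v) p₀ v =
          h p₀ * fderiv ℝ (fun q => fderiv ℝ w q v) p₀ v +
            fderiv ℝ (fun q => fderiv ℝ h q v) p₀ v * w p₀ := by
      intro v
      have hev : (fun q => fderiv ℝ u q v) =ᶠ[𝓝 p₀]
          fun q => h q * fderiv ℝ w q v + fderiv ℝ h q v * w q := by
        filter_upwards [hUnhds] with q hq
        exact hfirst v q hq
      have d1 : DifferentiableAt ℝ h p₀ := diffAt_of_contDiffOn hhsm isOpen_H2 (hUH hp₀U)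
      have d2 : DifferentiableAt ℝ (fun q => fderiv ℝ w q v) p₀ :=
        diffAt_of_contDiffOn (pd_contDiffOn hopen hwsm v) hopen hp₀U
      have d3 : DifferentiableAt ℝ (fun q => fderiv ℝ h q v) p₀ :=
        diffAt_of_contDiffOn (pd_contDiffOn isOpen_H2 hhsm v) isOpen_H2 (hUH hp₀U)
      have d4 : DifferentiableAt ℝ w p₀ := diffAt_of_contDiffOn hwsm hopen hp₀U
      rw [hev.fderiv_eq, pd_add (f := fun q => h q * fderiv ℝ w q v) (g := fun q => fderiv ℝ h q v * w q) v (d1.mul d2) (d3.mul d4), pd_mul v d1 d2, pd_mul v d3 d4,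
        hcrit]
      simp only [ContinuousLinearMap.zero_apply, mul_zero, zero_mul, add_zero, zero_add]
      try ring
    -- the PDE at p₀ in terms of w
    have hΔw : p₀.2 ^ 2 * (pdx (pdx w) p₀ + pdy (pdy w) p₀) = (1/4 + ε^2 - μ) * w p₀ := by
      have hx := hsecond (1, 0)
      have hy' := hsecond (0, 1)
      have hxxh : pdx (pdx h) p₀ = 0 := pdxx_hfun (hUH hp₀U)
      have hyyh : pdy (pdy h) p₀ = gfun2 ε c p₀.2 := pdyy_hfun (hUH hp₀U)
      have heq := heigen p₀ hp₀U
      have hu0 : u p₀ = h p₀ * w p₀ := by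
        rw [hwdef]; field_simp [ne_of_gt (hpos p₀ hp₀K)]
      have hgg : p₀.2 ^ 2 * gfun2 ε c p₀.2 = -(1/4 + ε^2) * h p₀ :=
        sq_mul_gfun2 (hUH hp₀U)
      rw [hypLap] at heq
      have hxx : pdx (pdx u) p₀ = h p₀ * pdx (pdx w) p₀ + pdx (pdx h) p₀ * w p₀ := hx
      have hyy : pdy (pdy u) p₀ = h p₀ * pdy (pdy w) p₀ + pdy (pdy h) p₀ * w p₀ := hy'
      rw [hxx, hyy, hxxh, hyyh, hu0] at heq
      have hhne : h p₀ ≠ 0 := ne_of_gt (hpos p₀ hp₀K)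
      have expand : -(p₀.2 ^ 2 * (h p₀ * pdx (pdx w) p₀ + 0 * w p₀ +
          (h p₀ * pdy (pdy w) p₀ + gfun2 ε c p₀.2 * w p₀))) = μ * (h p₀ * w p₀) := heq
      have goal' : h p₀ * (p₀.2 ^ 2 * (pdx (pdx w) p₀ + pdy (pdy w) p₀)) =
          h p₀ * ((1/4 + ε^2 - μ) * w p₀) := by
        linear_combination (-1 : ℝ) * expand - w p₀ * hgg
      exact mul_left_cancel₀ hhne goal'
    -- second derivative test in each coordinate direction
    have hD : ∀ v : ℝ × ℝ, fderiv ℝ (fun q => fderiv ℝ w q v) p₀ v ≤ 0 := by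
      intro v
      set ι : ℝ → ℝ × ℝ := fun t => p₀ + t • v with hιdef
      have hι0 : ι 0 = p₀ := by simp [hιdef]
      have hιcont : Continuous ι := continuous_const.add (continuous_id.smul continuous_const)
      have hιt : Tendsto ι (𝓝 0) (𝓝 p₀) := by
        have := hιcont.tendsto 0
        rwa [hι0] at this
      have hιd : ∀ t : ℝ, HasDerivAt ι v t := fun t => by
        have := ((hasDerivAt_id t).smul_const v).const_add p₀; rw [one_smul] at this; exact this
      have hmaxφ : IsLocalMax (fun t => w (ι t)) 0 := by
        have h1 := hιt.eventually hlocmax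
        filter_upwards [h1] with t ht
        simpa [hι0] using ht
      have hψ0 : fderiv ℝ w (ι 0) v = 0 := by rw [hι0, hcrit]; simp
      have hev : ∀ᶠ t in 𝓝 (0:ℝ), ι t ∈ U := hιt hUnhds
      have hφ' : ∀ᶠ t in 𝓝 (0:ℝ), HasDerivAt (fun s => w (ι s)) (fderiv ℝ w (ι t) v) t := by
        filter_upwards [hev] with t ht
        exact ((diffAt_of_contDiffOn hwsm hopen ht).hasFDerivAt).comp_hasDerivAt t (hιd t)
      have hψD : HasDerivAt (fun t => fderiv ℝ w (ι t) v)
          (fderiv ℝ (fun q => fderiv ℝ w q v) p₀ v) 0 := by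
        have hF : HasFDerivAt (fun q => fderiv ℝ w q v)
            (fderiv ℝ (fun q => fderiv ℝ w q v) p₀) (ι 0) := by
          rw [hι0]
          exact (diffAt_of_contDiffOn (pd_contDiffOn hopen hwsm v) hopen hp₀U).hasFDerivAt
        exact hF.comp_hasDerivAt 0 (hιd 0)
      exact secondDeriv_nonpos_of_isLocalMax' hmaxφ hψ0 hφ' hψD
    have hD1 : pdx (pdx w) p₀ ≤ 0 := hD (1, 0)
    have hD2 : pdy (pdy w) p₀ ≤ 0 := hD (0, 1)
    have hrhs : 0 < (1/4 + ε^2 - μ) * w p₀ :=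
      mul_pos (by nlinarith [pow_pos hε 2]) hwle
    have hlhs : p₀.2 ^ 2 * (pdx (pdx w) p₀ + pdy (pdy w) p₀) ≤ 0 :=
      mul_nonpos_of_nonneg_of_nonpos (sq_nonneg _) (by linarith)
    linarith [hΔw]
  intro p hp
  have hwp : w p ≤ w p₀ := hp₀max (subset_closure hp)
  have hup : u p = w p * h p := by
    rw [hwdef]; field_simp [ne_of_gt (hpos p (subset_closure hp))]
  rw [hup]
  exact mul_nonpos_of_nonpos_of_nonneg (le_trans hwp key) (hpos p (subset_closure hp)).le

lemma hypLap_neg (f : ℝ × ℝ → ℝ) (p : ℝ × ℝ) :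
    hypLap (fun q => -f q) p = -hypLap f p := by
  have h1 : ∀ g : ℝ × ℝ → ℝ, pdx (fun q => -g q) = fun r => -pdx g r := by
    intro g; funext r; simp [pdx, fderiv_neg]
  have h2 : ∀ g : ℝ × ℝ → ℝ, pdy (fun q => -g q) = fun r => -pdy g r := by
    intro g; funext r; simp [pdy, fderiv_neg]
  have hx : pdx (pdx (fun q => -f q)) p = -pdx (pdx f) p := by
    rw [h1 f, h1 (pdx f)]
  have hy : pdy (pdy (fun q => -f q)) p = -pdy (pdy f) p := by
    rw [h2 f, h2 (pdy f)]
  rw [hypLap, hypLap, hx, hy]; ring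

/-- **Lemma (no small Dirichlet eigenvalues on compactly contained domains).** If
`μ ∈ (0, 1/4]`, `U ⊆ ℍ²` is a nonempty open set with compact closure contained in `ℍ²`,
and `u` is `C¹` on the closure of `U`, smooth on `U`, satisfies `−Δu = μu` pointwise in
`U` and `u = 0` on `∂U`, then `u ≡ 0` on `U`. -/
theorem dirichlet_eigenfunction_small_eigenvalue_vanishes
    (μ : ℝ) (hμpos : 0 < μ) (hμle : μ ≤ 1 / 4)
    (U : Set (ℝ × ℝ)) (hUH : U ⊆ H2) (hne : U.Nonempty) (hopen : IsOpen U)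
    (hcomp : IsCompact (closure U)) (hclH : closure U ⊆ H2)
    (u : ℝ × ℝ → ℝ)
    (hC1 : ContDiffOn ℝ 1 u (closure U))
    (hsmooth : ContDiffOn ℝ (⊤ : ℕ∞) u U)
    (heigen : ∀ p ∈ U, -hypLap u p = μ * u p)
    (hbdry : ∀ q ∈ frontier U, u q = 0) :
    ∀ p ∈ U, u p = 0 := by
  intro p hp
  have h1 := aux_nonpos μ hμpos hμle U hUH hne hopen hcomp hclH u hC1 hsmooth heigen hbdry p hp
  have h2 := aux_nonpos μ hμpos hμle U hUH hne hopen hcomp hclH (fun q => -u q)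
    hC1.neg hsmooth.neg
    (fun q hq => by rw [hypLap_neg]; have := heigen q hq; ring_nf; ring_nf at this; linarith)
    (fun q hq => by simp [hbdry q hq]) p hp
  simp only [neg_nonpos] at h2
  linarith
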